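/- arXiv:1003.6119 — 2 statements merged into one kernel-verified Lean document; each statement's English description precedes it below -/
import Mathlib

section
/- Let d ≥ 2 and let p_1, p_2, … be i.i.d. random vectors uniformly distributed on the d-dimensional simplex S_d, and let M_n denote the number of maxima of {p_1,…,p_n}. Then E[M_n] = Σ_{j=0}^{d−1} C(d−1,j) (−1)^j Γ((j+1)/d) n^{(d−1−j)/d} + O(n^{−1/d}) as n → ∞. -/
open MeasureTheory ProbabilityTheory Filter Asymptotics Real Set

noncomputable section

attribute [local instance] Classical.propDecidable

/-- `prec q p` means `q ≺ p`, i.e. `p` strictly dominates `q` in every coordinate. -/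
def prec {d : ℕ} (q p : Fin d → ℝ) : Prop := ∀ i, q i < p i

/-- The `d`-dimensional simplex. -/
def simplex (d : ℕ) : Set (Fin d → ℝ) := {x | (∀ i, 0 ≤ x i) ∧ (∑ i, x i) ≤ 1}

/-- The hypercube `[0,1]^d`. -/
def cube (d : ℕ) : Set (Fin d → ℝ) := Set.univ.pi fun _ => Set.Icc 0 1

/-- The uniform probability measure on a set `S ⊆ ℝ^d`. -/
def unif {d : ℕ} (S : Set (Fin d → ℝ)) : Measure (Fin d → ℝ) :=
  (volume S)⁻¹ • volume.restrict S

/-- The number of Pareto records among `q 0, …, q (n-1)`. -/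
def paretoCount {d : ℕ} (q : ℕ → Fin d → ℝ) (n : ℕ) : ℕ :=
  ((Finset.range n).filter fun k => ∀ i < k, ¬ prec (q k) (q i)).card

/-- The number of maxima among `q 0, …, q (n-1)`. -/
def maxCount {d : ℕ} (q : ℕ → Fin d → ℝ) (n : ℕ) : ℕ :=
  ((Finset.range n).filter fun k => ∀ i < n, i ≠ k → ¬ prec (q k) (q i)).card

/-- The index of the most recent chain record among `q 0, …, q k`. -/
def chainLead {d : ℕ} (q : ℕ → Fin d → ℝ) : ℕ → ℕ
  | 0 => 0
  | k + 1 => if prec (q (chainLead q k)) (q (k + 1)) then k + 1 else chainLead q k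

/-- The number of chain records among `q 0, …, q (n-1)`:
`q 0` is a chain record, and `q k` is a chain record iff it dominates the most recent
chain record among `q 0, …, q (k-1)`. -/
def chainCount {d : ℕ} (q : ℕ → Fin d → ℝ) (n : ℕ) : ℕ :=
  ((Finset.range n).filter fun k => chainLead q k = k).card

/-- The number of dominating records among `q 0, …, q (n-1)`. -/
def domCount {d : ℕ} (q : ℕ → Fin d → ℝ) (n : ℕ) : ℕ :=
  ((Finset.range n).filter fun k => ∀ i < k, prec (q i) (q k)).card

/-- The harmonic-type sum `H_n^{(a)} = ∑_{j=1}^n j^{-a}`. -/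
def genH (a n : ℕ) : ℝ := ∑ j ∈ Finset.range n, (1 : ℝ) / (j + 1 : ℝ) ^ a

/-- The standard normal distribution function `Φ`. -/
def stdNormalCDF (x : ℝ) : ℝ := (gaussianReal 0 1 (Set.Iio x)).toReal

/-!
By exchangeability `E[M_n] = n · P(p_1 is a maximum)`. The points of the simplex dominating `q`
form a copy of the simplex scaled by `1 - ∑ q`, so conditionally on `p_1 = q` the other points miss
that region with probability `(1 - (1 - ∑ q)^d)^(n-1)`. Under the uniform law `∑ q` is distributed
as `t^(1/d)` with `t` uniform on `(0,1]`, and the substitution `t = (1-u)^d` turns the expectation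
into `n d ∫₀¹ (1 - u^d)^(n-1) (1 - u)^(d-1) du`. Expanding `(1-u)^(d-1)` leaves Beta integrals
`∫₀¹ (1 - u^d)^m u^j du = B((j+1)/d, m+1) / d`, whence the exact formula
`E[M_n] = ∑_j C(d-1,j) (-1)^j Γ((j+1)/d) Γ(n+1) / Γ(n+(j+1)/d)`. Finally, log-convexity of `Γ`
gives Wendel's inequality `Γ(x+c) ≤ x^c Γ(x)` for `0 ≤ c ≤ 1`, hence
`Γ(n+1)/Γ(n+s) = n^(1-s) + O(n^(-s))` with `s = (j+1)/d ≥ 1/d`.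
-/

open scoped Nat

section Simplex

open scoped Pointwise

variable {d : ℕ}

lemma measurableSet_prec : MeasurableSet {q : (Fin d → ℝ) × (Fin d → ℝ) | prec q.1 q.2} := by
  simp only [prec, ofPred_forall]
  exact .iInter fun i => measurableSet_lt measurable_fst.eval measurable_snd.eval

lemma measurableSet_simplex : MeasurableSet (simplex d) := by
  simp only [simplex, ofPred_and, ofPred_forall]
  exact (MeasurableSet.iInter fun i =>
    measurableSet_le measurable_const (measurable_pi_apply i)).inter
    (measurableSet_le (Finset.measurable_sum _ fun i _ => measurable_pi_apply i) measurable_const)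

lemma setOf_nonneg_sum_le_eq_smul_simplex {s : ℝ} (hs : 0 ≤ s) :
    {x : Fin d → ℝ | (∀ i, 0 ≤ x i) ∧ ∑ i, x i ≤ s} = s • simplex d := by
  rcases hs.eq_or_lt with rfl | hs
  · rw [zero_smul_set ⟨0, by simp [simplex]⟩]
    ext x
    simp only [mem_ofPred_eq, Set.mem_zero]
    refine ⟨fun ⟨h0, hsum⟩ => ?_, by rintro rfl; simp⟩
    funext i
    exact (Finset.sum_eq_zero_iff_of_nonneg fun j _ => h0 j).1
      (hsum.antisymm (Finset.sum_nonneg fun j _ => h0 j)) i (Finset.mem_univ i)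
  · ext x
    simp only [mem_smul_set_iff_inv_smul_mem₀ hs.ne', simplex, mem_ofPred_eq, Pi.smul_apply,
      smul_eq_mul, ← Finset.mul_sum, inv_mul_le_iff₀ hs, mul_one,
      mul_nonneg_iff_of_pos_left (inv_pos.2 hs)]

lemma volume_setOf_nonneg_sum_le {s : ℝ} (hs : 0 ≤ s) :
    volume {x : Fin d → ℝ | (∀ i, 0 ≤ x i) ∧ ∑ i, x i ≤ s}
      = ENNReal.ofReal (s ^ d) * volume (simplex d) := by
  rw [setOf_nonneg_sum_le_eq_smul_simplex hs, Measure.addHaar_smul_of_nonneg _ hs,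
    Module.finrank_fin_fun]

lemma volume_setOf_pos_sum_le (s : ℝ) :
    volume {x : Fin d → ℝ | (∀ i, 0 < x i) ∧ ∑ i, x i ≤ s}
      = volume {x : Fin d → ℝ | (∀ i, 0 ≤ x i) ∧ ∑ i, x i ≤ s} := by
  refine le_antisymm (measure_mono fun x hx => ⟨fun i => (hx.1 i).le, hx.2⟩) ?_
  have hsub : {x : Fin d → ℝ | (∀ i, 0 ≤ x i) ∧ ∑ i, x i ≤ s}
      ⊆ {x | (∀ i, 0 < x i) ∧ ∑ i, x i ≤ s} ∪ ⋃ i, {x | x i = 0} := by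
    intro x ⟨h0, hsum⟩
    by_cases hpos : ∀ i, 0 < x i
    · exact Or.inl ⟨hpos, hsum⟩
    · obtain ⟨i, hi⟩ := not_forall.1 hpos
      exact Or.inr (mem_iUnion.2 ⟨i, (not_lt.1 hi).antisymm (h0 i)⟩)
  have hnull : volume (⋃ i, {x : Fin d → ℝ | x i = 0}) = 0 :=
    measure_iUnion_null fun i => by rw [volume_pi]; exact Measure.pi_hyperplane _ i 0
  calc _ ≤ _ := measure_mono hsub
    _ ≤ _ := measure_union_le _ _
    _ = _ := by rw [hnull, add_zero]

lemma volume_simplex_pos : 0 < volume (simplex d) := by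
  have hbox : (univ.pi fun _ : Fin d => Ioo (0 : ℝ) (1 / (d + 1))) ⊆ simplex d := by
    intro x hx
    refine ⟨fun i => (hx i (mem_univ i)).1.le, ?_⟩
    calc ∑ i, x i ≤ ∑ _i : Fin d, 1 / ((d : ℝ) + 1) :=
          Finset.sum_le_sum fun i _ => (hx i (mem_univ i)).2.le
      _ ≤ 1 := by
          rw [Finset.sum_const, Finset.card_univ, Fintype.card_fin, nsmul_eq_mul, mul_one_div,
            div_le_one (by positivity)]
          linarith
  refine lt_of_lt_of_le ?_ (measure_mono hbox)
  simp only [volume_pi_pi, Real.volume_Ioo, Finset.prod_const, Finset.card_univ,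
    Fintype.card_fin, sub_zero]
  exact ENNReal.pow_pos (ENNReal.ofReal_pos.2 (by positivity)) _

lemma volume_simplex_ne_top : volume (simplex d) ≠ ⊤ := by
  have hcube : IsCompact (univ.pi fun _ : Fin d => Icc (0 : ℝ) 1) :=
    isCompact_univ_pi fun _ => isCompact_Icc
  refine ne_top_of_le_ne_top hcube.measure_ne_top (measure_mono fun x hx i _ => ⟨hx.1 i, ?_⟩)
  exact (Finset.single_le_sum (fun j _ => hx.1 j) (Finset.mem_univ i)).trans hx.2

instance isProbabilityMeasure_unif_simplex : IsProbabilityMeasure (unif (simplex d)) := by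
  constructor
  rw [unif, Measure.smul_apply, Measure.restrict_apply_univ, smul_eq_mul,
    ENNReal.inv_mul_cancel volume_simplex_pos.ne' volume_simplex_ne_top]

lemma unif_simplex_apply {A : Set (Fin d → ℝ)} (hA : MeasurableSet A) :
    unif (simplex d) A = volume (A ∩ simplex d) / volume (simplex d) := by
  rw [unif, Measure.smul_apply, Measure.restrict_apply hA, smul_eq_mul, ENNReal.div_eq_inv_mul]

lemma volume_setOf_prec_inter_simplex {q : Fin d → ℝ} (hq : q ∈ simplex d) :
    volume ({y | prec q y} ∩ simplex d)
      = ENNReal.ofReal ((1 - ∑ i, q i) ^ d) * volume (simplex d) := by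
  have hset : {y | prec q y} ∩ simplex d
      = (fun y => -q + y) ⁻¹' {z | (∀ i, 0 < z i) ∧ ∑ i, z i ≤ 1 - ∑ i, q i} := by
    ext y
    simp only [mem_inter_iff, mem_ofPred_eq, mem_preimage, prec, simplex, neg_add_eq_sub,
      Pi.sub_apply, sub_pos, Finset.sum_sub_distrib]
    constructor
    · rintro ⟨hlt, -, hsum⟩
      exact ⟨hlt, by linarith⟩
    · rintro ⟨hlt, hsum⟩
      exact ⟨hlt, fun i => (hq.1 i).trans (hlt i).le, by linarith⟩
  rw [hset, measure_preimage_add, volume_setOf_pos_sum_le,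
    volume_setOf_nonneg_sum_le (by linarith [hq.2])]

lemma measurableSet_setOf_prec (q : Fin d → ℝ) : MeasurableSet {y | prec q y} :=
  measurableSet_prec.preimage measurable_prodMk_left

lemma unif_simplex_setOf_prec {q : Fin d → ℝ} (hq : q ∈ simplex d) :
    unif (simplex d) {y | prec q y} = ENNReal.ofReal ((1 - ∑ i, q i) ^ d) := by
  rw [unif_simplex_apply (measurableSet_setOf_prec q), volume_setOf_prec_inter_simplex hq,
    ENNReal.mul_div_cancel_right volume_simplex_pos.ne' volume_simplex_ne_top]

lemma preimage_rpow_inv_Iic_inter_Ioc (hd : 0 < d) {s : ℝ} (hs : 0 ≤ s) :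
    (fun t : ℝ => t ^ (d : ℝ)⁻¹) ⁻¹' Iic s ∩ Ioc 0 1 = Ioc 0 (min s 1 ^ d) := by
  ext t
  simp only [mem_inter_iff, mem_preimage, mem_Iic, mem_Ioc]
  have hr : 0 ≤ min s 1 := le_min hs zero_le_one
  have hroot_le {t : ℝ} (ht : 0 ≤ t) : t ^ (d : ℝ)⁻¹ ≤ min s 1 ↔ t ≤ min s 1 ^ d := by
    rw [rpow_inv_le_iff_of_pos ht hr (by positivity), rpow_natCast]
  constructor
  · rintro ⟨hts, ht0, ht1⟩
    exact ⟨ht0, (hroot_le ht0.le).1 (le_min hts (rpow_le_one ht0.le ht1 (by positivity)))⟩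
  · rintro ⟨ht0, htr⟩
    exact ⟨((hroot_le ht0.le).2 htr).trans (min_le_left _ _), ht0,
      htr.trans (pow_le_one₀ hr (min_le_right _ _))⟩

lemma map_sum_unif_simplex (hd : 0 < d) :
    (unif (simplex d)).map (fun x => ∑ i, x i)
      = (volume.restrict (Ioc (0 : ℝ) 1)).map (fun t => t ^ (d : ℝ)⁻¹) := by
  have hsum : Measurable fun x : Fin d → ℝ => ∑ i, x i :=
    Finset.measurable_sum _ fun i _ => measurable_pi_apply i
  have hroot : Measurable fun t : ℝ => t ^ (d : ℝ)⁻¹ := by fun_prop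
  have : IsProbabilityMeasure (volume.restrict (Ioc (0 : ℝ) 1)) := ⟨by simp⟩
  have : IsProbabilityMeasure ((volume.restrict (Ioc (0 : ℝ) 1)).map (fun t => t ^ (d : ℝ)⁻¹)) :=
    Measure.isProbabilityMeasure_map hroot.aemeasurable
  refine Measure.ext_of_Iic _ _ fun s => ?_
  rw [Measure.map_apply hsum measurableSet_Iic, Measure.map_apply hroot measurableSet_Iic,
    Measure.restrict_apply (hroot measurableSet_Iic),
    unif_simplex_apply (hsum measurableSet_Iic)]
  rcases lt_or_ge s 0 with hs | hs
  · have hleft : (fun x : Fin d → ℝ => ∑ i, x i) ⁻¹' Iic s ∩ simplex d = ∅ :=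
      eq_empty_of_forall_notMem fun x ⟨hxs, hx⟩ =>
        (Finset.sum_nonneg fun i _ => hx.1 i).not_gt (lt_of_le_of_lt hxs hs)
    have hright : (fun t : ℝ => t ^ (d : ℝ)⁻¹) ⁻¹' Iic s ∩ Ioc 0 1 = ∅ :=
      eq_empty_of_forall_notMem fun t ⟨hts, ht⟩ =>
        (rpow_pos_of_pos ht.1 _).not_ge (le_trans hts hs.le)
    simp [hleft, hright]
  · have hleft : (fun x : Fin d → ℝ => ∑ i, x i) ⁻¹' Iic s ∩ simplex d
        = {x | (∀ i, 0 ≤ x i) ∧ ∑ i, x i ≤ min s 1} := by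
      ext x
      simp only [mem_inter_iff, mem_preimage, mem_Iic, simplex, mem_ofPred_eq, le_min_iff]
      tauto
    rw [hleft, preimage_rpow_inv_Iic_inter_Ioc hd hs,
      volume_setOf_nonneg_sum_le (le_min hs zero_le_one), Real.volume_Ioc, sub_zero,
      ENNReal.mul_div_cancel_right volume_simplex_pos.ne' volume_simplex_ne_top]

lemma sum_mem_Icc_of_mem_simplex {q : Fin d → ℝ} (hq : q ∈ simplex d) : ∑ i, q i ∈ Icc 0 1 :=
  ⟨Finset.sum_nonneg fun i _ => hq.1 i, hq.2⟩

lemma unif_simplex_setOf_not_prec {q : Fin d → ℝ} (hq : q ∈ simplex d) :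
    unif (simplex d) {y | ¬ prec q y} = ENNReal.ofReal (1 - (1 - ∑ i, q i) ^ d) := by
  have hbase : 0 ≤ 1 - ∑ i, q i := by linarith [(sum_mem_Icc_of_mem_simplex hq).2]
  rw [← compl_ofPred, prob_compl_eq_one_sub (measurableSet_setOf_prec q),
    unif_simplex_setOf_prec hq, ← ENNReal.ofReal_one,
    ← ENNReal.ofReal_sub _ (pow_nonneg hbase d)]

lemma toReal_lintegral_unif_simplex_not_prec_pow (hd : 0 < d) (m : ℕ) :
    (∫⁻ a, unif (simplex d) {b | ¬ prec a b} ^ m ∂unif (simplex d)).toReal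
      = ∫ t in (0 : ℝ)..1, (1 - (1 - t ^ (d : ℝ)⁻¹) ^ d) ^ m := by
  set g : ℝ → ℝ := fun s => (1 - (1 - s) ^ d) ^ m
  have hg : Continuous g := by fun_prop
  have hbase {s : ℝ} (hs : s ∈ Icc 0 1) : 0 ≤ 1 - (1 - s) ^ d :=
    sub_nonneg.2 (pow_le_one₀ (by linarith [hs.2]) (by linarith [hs.1]))
  have hae : ∀ᵐ a ∂unif (simplex d),
      unif (simplex d) {b | ¬ prec a b} ^ m = ENNReal.ofReal (g (∑ i, a i)) := by
    have hsupp : ∀ᵐ a ∂unif (simplex d), a ∈ simplex d :=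
      Measure.ae_smul_measure (ae_restrict_mem measurableSet_simplex) _
    filter_upwards [hsupp] with a ha
    rw [unif_simplex_setOf_not_prec ha,
      ← ENNReal.ofReal_pow (hbase (sum_mem_Icc_of_mem_simplex ha))]
  have hroot : Continuous fun t : ℝ => t ^ (d : ℝ)⁻¹ := continuous_rpow_const (by positivity)
  have hgroot_nonneg {t : ℝ} (ht : t ∈ Ioc 0 1) : 0 ≤ g (t ^ (d : ℝ)⁻¹) :=
    pow_nonneg (hbase ⟨rpow_nonneg ht.1.le _, rpow_le_one ht.1.le ht.2 (by positivity)⟩) m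
  rw [lintegral_congr_ae hae,
    ← lintegral_map hg.measurable.ennreal_ofReal
      (Finset.measurable_sum _ fun i _ => measurable_pi_apply i),
    map_sum_unif_simplex hd, lintegral_map hg.measurable.ennreal_ofReal hroot.measurable,
    ← ofReal_integral_eq_lintegral_ofReal, ENNReal.toReal_ofReal,
    intervalIntegral.integral_of_le zero_le_one]
  · exact setIntegral_nonneg measurableSet_Ioc fun t ht => hgroot_nonneg ht
  · exact (hg.comp hroot).integrableOn_Ioc
  · exact ae_restrict_of_forall_mem measurableSet_Ioc fun t ht => hgroot_nonneg ht

end Simplex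

section Maxima

variable {d : ℕ}

lemma measurableSet_setOf_isMaximum {n : ℕ} (k : Fin n) :
    MeasurableSet {x : Fin n → Fin d → ℝ | ∀ j, j ≠ k → ¬ prec (x k) (x j)} := by
  have hprec (j : Fin n) : MeasurableSet {x : Fin n → Fin d → ℝ | prec (x k) (x j)} :=
    measurableSet_prec.preimage (f := fun x : Fin n → Fin d → ℝ => (x k, x j)) (by fun_prop)
  simp only [ofPred_forall]
  exact .iInter fun j => .iInter fun _ => (hprec j).compl

lemma measure_pi_setOf_isMaximum (μ : Measure (Fin d → ℝ)) [SigmaFinite μ] (m : ℕ)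
    (k : Fin (m + 1)) :
    Measure.pi (fun _ => μ) {x | ∀ j, j ≠ k → ¬ prec (x k) (x j)}
      = ∫⁻ a, μ {b | ¬ prec a b} ^ m ∂μ := by
  set C : Set ((Fin d → ℝ) × (Fin m → Fin d → ℝ)) := {y | ∀ j, ¬ prec y.1 (y.2 j)}
  have hC : MeasurableSet C := by
    simp only [C, ofPred_forall]
    exact .iInter fun j => (measurableSet_prec.preimage
      (measurable_fst.prodMk ((measurable_pi_apply j).comp measurable_snd))).compl
  have hpre : {x : Fin (m + 1) → Fin d → ℝ | ∀ j, j ≠ k → ¬ prec (x k) (x j)}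
      = MeasurableEquiv.piFinSuccAbove (fun _ => Fin d → ℝ) k ⁻¹' C := by
    ext x
    refine ⟨fun h j => h _ (Fin.succAbove_ne k j), fun h j hj => ?_⟩
    obtain ⟨i, rfl⟩ := Fin.exists_succAbove_eq hj
    exact h i
  have hslice (a : Fin d → ℝ) : Prod.mk a ⁻¹' C = univ.pi fun _ => {b | ¬ prec a b} := by
    ext y
    simp [C]
  rw [hpre, (measurePreserving_piFinSuccAbove (fun _ => μ) k).measure_preimage
    hC.nullMeasurableSet, Measure.prod_apply hC]
  simp [hslice, Measure.pi_pi]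

lemma cast_maxCount_eq_sum_indicator (q : ℕ → Fin d → ℝ) (n : ℕ) :
    (maxCount q n : ℝ) = ∑ k : Fin n,
      {x : Fin n → Fin d → ℝ | ∀ j, j ≠ k → ¬ prec (x k) (x j)}.indicator 1 (fun i => q i) := by
  rw [maxCount, Finset.card_filter, Nat.cast_sum, Finset.sum_range]
  refine Finset.sum_congr rfl fun k _ => ?_
  have hiff : (∀ i < n, i ≠ k → ¬ prec (q k) (q i)) ↔ ∀ j : Fin n, j ≠ k → ¬ prec (q k) (q j) := by
    simp [Fin.forall_iff, Fin.ext_iff]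
  simp only [indicator_apply, mem_ofPred_eq, Pi.one_apply, hiff, Nat.cast_ite, Nat.cast_one,
    Nat.cast_zero]

lemma integral_maxCount {Ω : Type*} [MeasurableSpace Ω] (P : Measure Ω) [IsProbabilityMeasure P]
    (μ : Measure (Fin d → ℝ)) (p : ℕ → Ω → (Fin d → ℝ)) (hmeas : ∀ n, Measurable (p n))
    (hdist : ∀ n, P.map (p n) = μ) (hindep : iIndepFun p P) (n : ℕ) :
    ∫ ω, (maxCount (fun i => p i ω) n : ℝ) ∂P
      = ∑ k : Fin n, (Measure.pi fun _ => μ).real {x | ∀ j, j ≠ k → ¬ prec (x k) (x j)} := by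
  have hvec : Measurable fun ω (i : Fin n) => p i ω := measurable_pi_lambda _ fun i => hmeas i
  have hlaw : P.map (fun ω (i : Fin n) => p i ω) = Measure.pi fun _ => μ := by
    have hind : iIndepFun (fun i : Fin n => p i) P := hindep.precomp Fin.val_injective
    rw [hind.map_fun_eq_pi_map fun i : Fin n => (hmeas i).aemeasurable]
    simp only [hdist]
  simp_rw [cast_maxCount_eq_sum_indicator]
  rw [integral_finsetSum _ fun k _ =>
    ((integrable_const 1).indicator (measurableSet_setOf_isMaximum k)).comp_measurable hvec]
  refine Finset.sum_congr rfl fun k _ => ?_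
  have hS := measurableSet_setOf_isMaximum (d := d) k
  have hmap := integral_map (μ := P) hvec.aemeasurable
    ((measurable_one (α := ℝ)).indicator hS).aestronglyMeasurable
  rw [hlaw, integral_indicator_one hS] at hmap
  exact hmap.symm

lemma integral_maxCount_succ {Ω : Type*} [MeasurableSpace Ω] (P : Measure Ω)
    [IsProbabilityMeasure P] (μ : Measure (Fin d → ℝ)) [SigmaFinite μ]
    (p : ℕ → Ω → (Fin d → ℝ)) (hmeas : ∀ n, Measurable (p n))
    (hdist : ∀ n, P.map (p n) = μ) (hindep : iIndepFun p P) (m : ℕ) :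
    ∫ ω, (maxCount (fun i => p i ω) (m + 1) : ℝ) ∂P
      = (m + 1) * (∫⁻ a, μ {b | ¬ prec a b} ^ m ∂μ).toReal := by
  simp [integral_maxCount P μ p hmeas hdist hindep, Measure.real, measure_pi_setOf_isMaximum]

end Maxima

section BetaIntegrals

lemma one_sub_pow_eq_sum {R : Type*} [CommRing R] (u : R) (n : ℕ) :
    (1 - u) ^ n = ∑ j ∈ Finset.range (n + 1), (n.choose j : R) * (-1) ^ j * u ^ j := by
  rw [sub_eq_neg_add, add_pow]
  refine Finset.sum_congr rfl fun j _ => ?_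
  rw [neg_pow, one_pow, mul_one]
  ring

lemma sum_choose_mul_neg_one_pow_div_add (m : ℕ) {a : ℝ} (ha : 0 < a) :
    ∑ i ∈ Finset.range (m + 1), (m.choose i : ℝ) * ((-1) ^ i / (a + i))
      = m ! * Gamma a / Gamma (a + m + 1) := by
  induction m generalizing a with
  | zero => simp [Gamma_add_one ha.ne', div_mul_cancel_right₀ (Gamma_pos_of_pos ha).ne']
  | succ m ih =>
    rw [Finset.sum_choose_succ_mul (fun i _ => (-1 : ℝ) ^ i / (a + i)) m]
    have hshift : ∑ i ∈ Finset.range (m + 1), (m.choose i : ℝ) * ((-1) ^ (i + 1) / (a + ↑(i + 1)))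
        = -∑ i ∈ Finset.range (m + 1), (m.choose i : ℝ) * ((-1) ^ i / ((a + 1) + i)) := by
      rw [← Finset.sum_neg_distrib]
      refine Finset.sum_congr rfl fun i _ => ?_
      push_cast
      ring
    have hpos : 0 < Gamma (a + m + 1) := Gamma_pos_of_pos (by positivity)
    rw [hshift, ih ha, ih (by linarith), show a + 1 + m + 1 = a + m + 1 + 1 by ring,
      show a + ↑(m + 1) + 1 = a + m + 1 + 1 by push_cast; ring,
      Gamma_add_one (by positivity : a + m + 1 ≠ 0), Gamma_add_one ha.ne', Nat.factorial_succ]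
    push_cast
    field_simp
    ring

variable {d : ℕ}

lemma integral_one_sub_pow_pow_mul_pow (hd : 0 < d) (m j : ℕ) :
    ∫ u in (0 : ℝ)..1, (1 - u ^ d) ^ m * u ^ j
      = m ! * Gamma ((j + 1) / d) / (d * Gamma ((j + 1) / d + m + 1)) := by
  set a : ℝ := (j + 1) / d with ha
  have hd' : (0 : ℝ) < d := Nat.cast_pos.2 hd
  have hexpand (u : ℝ) : (1 - u ^ d) ^ m * u ^ j
      = ∑ i ∈ Finset.range (m + 1), (m.choose i : ℝ) * (-1) ^ i * u ^ (d * i + j) := by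
    rw [one_sub_pow_eq_sum, Finset.sum_mul]
    refine Finset.sum_congr rfl fun i _ => ?_
    rw [pow_add, pow_mul]
    ring
  have hterm (i : ℕ) : (1 : ℝ) / ((d * i + j : ℕ) + 1) = 1 / d * (1 / (a + i)) := by
    rw [ha]
    push_cast
    field_simp
    ring
  simp_rw [hexpand]
  rw [intervalIntegral.integral_finsetSum fun i _ =>
    (by fun_prop : Continuous _).intervalIntegrable _ _]
  simp only [intervalIntegral.integral_const_mul, integral_pow, one_pow,
    zero_pow (Nat.succ_ne_zero _), sub_zero, hterm]
  rw [mul_comm (d : ℝ), ← div_div, ← sum_choose_mul_neg_one_pow_div_add m (by positivity),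
    Finset.sum_div]
  refine Finset.sum_congr rfl fun i _ => ?_
  ring

lemma integral_one_sub_pow_pow_mul_one_sub_pow (hd : 0 < d) (m : ℕ) :
    ∫ u in (0 : ℝ)..1, (1 - u ^ d) ^ m * (1 - u) ^ (d - 1)
      = ∑ j ∈ Finset.range d, ((d - 1).choose j : ℝ) * (-1) ^ j *
          (m ! * Gamma ((j + 1) / d) / (d * Gamma ((j + 1) / d + m + 1))) := by
  simp_rw [one_sub_pow_eq_sum _ (d - 1), Nat.sub_add_cancel hd, Finset.mul_sum]
  rw [intervalIntegral.integral_finsetSum fun j _ =>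
    (by fun_prop : Continuous _).intervalIntegrable _ _]
  refine Finset.sum_congr rfl fun j _ => ?_
  rw [← integral_one_sub_pow_pow_mul_pow hd, ← intervalIntegral.integral_const_mul]
  congr 1 with u
  ring

lemma integral_one_sub_one_sub_rpow_pow (hd : 0 < d) (m : ℕ) :
    ∫ t in (0 : ℝ)..1, (1 - (1 - t ^ (d : ℝ)⁻¹) ^ d) ^ m
      = d * ∫ u in (0 : ℝ)..1, (1 - u ^ d) ^ m * (1 - u) ^ (d - 1) := by
  set g : ℝ → ℝ := fun t => (1 - (1 - t ^ (d : ℝ)⁻¹) ^ d) ^ m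
  have hg : Continuous g := by
    have : Continuous fun t : ℝ => t ^ (d : ℝ)⁻¹ := continuous_rpow_const (by positivity)
    fun_prop
  have hderiv : ∀ u ∈ uIcc (0 : ℝ) 1,
      HasDerivAt (fun u : ℝ => (1 - u) ^ d) (d * (1 - u) ^ (d - 1) * -1) u := fun u _ =>
    ((hasDerivAt_id u).const_sub 1).pow d
  have hsubst := intervalIntegral.integral_comp_mul_deriv hderiv (by fun_prop) hg
  have hintegrand : EqOn (fun u => (g ∘ fun u => (1 - u) ^ d) u * (d * (1 - u) ^ (d - 1) * -1))
      (fun u => -(d * ((1 - u ^ d) ^ m * (1 - u) ^ (d - 1)))) (uIcc 0 1) := by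
    intro u hu
    rw [uIcc_of_le zero_le_one] at hu
    have hroot : ((1 - u) ^ d) ^ (d : ℝ)⁻¹ = 1 - u := by
      rw [← rpow_natCast, ← rpow_mul (by linarith [hu.2]),
        mul_inv_cancel₀ (Nat.cast_ne_zero.2 hd.ne'), rpow_one]
    simp only [Function.comp_apply, g, hroot, sub_sub_cancel]
    ring
  rw [intervalIntegral.integral_congr hintegrand, intervalIntegral.integral_neg,
    intervalIntegral.integral_const_mul, sub_zero, one_pow, sub_self, zero_pow hd.ne',
    intervalIntegral.integral_symm 0 1] at hsubst
  linarith

end BetaIntegrals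

lemma integral_maxCount_simplex {Ω : Type*} [MeasurableSpace Ω] (P : Measure Ω)
    [IsProbabilityMeasure P] {d : ℕ} (hd : 0 < d) (p : ℕ → Ω → (Fin d → ℝ))
    (hmeas : ∀ n, Measurable (p n)) (hdist : ∀ n, P.map (p n) = unif (simplex d))
    (hindep : iIndepFun p P) {n : ℕ} (hn : n ≠ 0) :
    ∫ ω, (maxCount (fun i => p i ω) n : ℝ) ∂P
      = ∑ j ∈ Finset.range d, ((d - 1).choose j : ℝ) * (-1) ^ j * Gamma ((j + 1) / d) *
          (Gamma (n + 1) / Gamma (n + (j + 1) / d)) := by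
  obtain ⟨m, rfl⟩ := Nat.exists_eq_succ_of_ne_zero hn
  rw [integral_maxCount_succ P _ p hmeas hdist hindep,
    toReal_lintegral_unif_simplex_not_prec_pow hd, integral_one_sub_one_sub_rpow_pow hd,
    integral_one_sub_pow_pow_mul_one_sub_pow hd,
    Finset.mul_sum, Finset.mul_sum]
  refine Finset.sum_congr rfl fun j _ => ?_
  have hd' : (d : ℝ) ≠ 0 := Nat.cast_ne_zero.2 hd.ne'
  have hΓ : 0 < Gamma ((j + 1) / d + m + 1) := Gamma_pos_of_pos (by positivity)
  rw [Gamma_nat_eq_factorial, Nat.factorial_succ, Nat.cast_mul, Nat.cast_succ,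
    show (m : ℝ) + 1 + (j + 1) / d = (j + 1) / d + m + 1 by ring]
  field_simp

lemma Gamma_add_le_rpow_mul_Gamma {y c : ℝ} (hy : 0 < y) (hc0 : 0 ≤ c) (hc1 : c ≤ 1) :
    Gamma (y + c) ≤ y ^ c * Gamma y := by
  have hconv := convexOn_log_Gamma.2 (mem_Ioi.2 hy) (mem_Ioi.2 (by linarith : 0 < y + 1))
    (sub_nonneg.2 hc1) hc0 (by ring)
  simp only [smul_eq_mul, Function.comp_apply] at hconv
  rw [show (1 - c) * y + c * (y + 1) = y + c by ring, Gamma_add_one hy.ne',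
    log_mul hy.ne' (Gamma_pos_of_pos hy).ne'] at hconv
  rw [← log_le_log_iff (Gamma_pos_of_pos (by linarith)) (by positivity),
    log_mul (by positivity) (Gamma_pos_of_pos hy).ne', log_rpow hy]
  linarith

lemma abs_Gamma_add_one_div_Gamma_add_sub_rpow_le {x s : ℝ} (hx : 0 < x) (hs0 : 0 < s)
    (hs1 : s ≤ 1) :
    |Gamma (x + 1) / Gamma (x + s) - x ^ (1 - s)| ≤ x ^ (-s) := by
  have hΓ : 0 < Gamma (x + s) := Gamma_pos_of_pos (by linarith)
  have hlower : x ^ (1 - s) ≤ Gamma (x + 1) / Gamma (x + s) := by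
    rw [le_div_iff₀ hΓ]
    calc x ^ (1 - s) * Gamma (x + s) ≤ x ^ (1 - s) * (x ^ s * Gamma x) := by
          gcongr
          exact Gamma_add_le_rpow_mul_Gamma hx hs0.le hs1
      _ = Gamma (x + 1) := by
          rw [← mul_assoc, ← rpow_add hx, sub_add_cancel, rpow_one, Gamma_add_one hx.ne']
  have hupper : Gamma (x + 1) / Gamma (x + s) ≤ x ^ (1 - s) + x ^ (-s) := by
    rw [div_le_iff₀ hΓ]
    calc Gamma (x + 1) = Gamma ((x + s) + (1 - s)) := by ring_nf
      _ ≤ (x + s) ^ (1 - s) * Gamma (x + s) :=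
          Gamma_add_le_rpow_mul_Gamma (by linarith) (by linarith) (by linarith)
      _ ≤ (x + 1) ^ (1 - s) * Gamma (x + s) := by gcongr
      _ = (x + 1) * (x + 1) ^ (-s) * Gamma (x + s) := by
          rw [sub_eq_add_neg, rpow_add (by linarith), rpow_one]
      _ ≤ (x + 1) * x ^ (-s) * Gamma (x + s) := by
          refine mul_le_mul_of_nonneg_right (mul_le_mul_of_nonneg_left ?_ (by linarith)) hΓ.le
          exact rpow_le_rpow_of_nonpos hx (by linarith) (by linarith)
      _ = (x ^ (1 - s) + x ^ (-s)) * Gamma (x + s) := by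
          rw [sub_eq_add_neg, rpow_add hx, rpow_one]
          ring
  rw [abs_sub_le_iff]
  constructor <;> linarith [rpow_nonneg hx.le (-s)]

lemma isBigO_Gamma_add_one_div_Gamma_add_sub_rpow {s r : ℝ} (hs0 : 0 < s) (hs1 : s ≤ 1)
    (hrs : r ≤ s) :
    (fun n : ℕ => Gamma (n + 1) / Gamma (n + s) - (n : ℝ) ^ (1 - s))
      =O[atTop] fun n : ℕ => (n : ℝ) ^ (-r) := by
  refine IsBigO.of_bound 1 ?_
  filter_upwards [eventually_ge_atTop 1] with n hn
  have hn' : (1 : ℝ) ≤ n := Nat.one_le_cast.2 hn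
  rw [norm_eq_abs, norm_of_nonneg (rpow_nonneg (by positivity) _), one_mul]
  exact (abs_Gamma_add_one_div_Gamma_add_sub_rpow_le (by positivity) hs0 hs1).trans
    (rpow_le_rpow_of_exponent_le hn' (by linarith))

/-- Asymptotics of the expected number of maxima for iud samples from the
`d`-dimensional simplex. -/
theorem maxima_mean_simplex
    {Ω : Type*} [MeasurableSpace Ω] (P : Measure Ω) [IsProbabilityMeasure P]
    (d : ℕ) (hd : 2 ≤ d) (p : ℕ → Ω → (Fin d → ℝ))
    (hmeas : ∀ n, Measurable (p n))
    (hdist : ∀ n, P.map (p n) = unif (simplex d))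
    (hindep : iIndepFun p P) :
    (fun n : ℕ =>
        (∫ ω, (maxCount (fun i => p i ω) n : ℝ) ∂P) -
          ∑ j ∈ Finset.range d,
            ((d - 1).choose j : ℝ) * (-1 : ℝ) ^ j * Real.Gamma (((j : ℝ) + 1) / d) *
              (n : ℝ) ^ (((d : ℝ) - 1 - j) / d))
      =O[atTop] fun n : ℕ => (n : ℝ) ^ (-(1 / (d : ℝ))) := by
  have hd0 : 0 < d := by omega
  have hexact : (fun n : ℕ => ∑ j ∈ Finset.range d,
      ((d - 1).choose j : ℝ) * (-1) ^ j * Gamma ((j + 1) / d) *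
        (Gamma (n + 1) / Gamma (n + (j + 1) / d) - (n : ℝ) ^ (1 - ((j : ℝ) + 1) / d)))
      =ᶠ[atTop] fun n : ℕ => (∫ ω, (maxCount (fun i => p i ω) n : ℝ) ∂P) -
          ∑ j ∈ Finset.range d, ((d - 1).choose j : ℝ) * (-1 : ℝ) ^ j *
            Gamma (((j : ℝ) + 1) / d) * (n : ℝ) ^ (((d : ℝ) - 1 - j) / d) := by
    filter_upwards [eventually_ne_atTop 0] with n hn
    rw [integral_maxCount_simplex P hd0 p hmeas hdist hindep hn, ← Finset.sum_sub_distrib]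
    refine Finset.sum_congr rfl fun j _ => ?_
    rw [show ((d : ℝ) - 1 - j) / d = 1 - (j + 1) / d by field_simp; ring]
    ring
  refine IsBigO.congr' (IsBigO.fun_sum fun j hj => ?_) hexact EventuallyEq.rfl
  have hj : (j : ℝ) + 1 ≤ d := by exact_mod_cast Finset.mem_range.1 hj
  refine (isBigO_Gamma_add_one_div_Gamma_add_sub_rpow (by positivity) ?_ ?_).const_mul_left _
  · rw [div_le_one (by positivity)]
    exact hj
  · gcongr
    linarith
end
end

section
/- Let d ≥ 1 and let p_1, p_2, … be i.i.d. random vectors uniformly distributed on the d-dimensional simplex S_d, and let Z_n denote the number of dominating records of p_1,…,p_n. Then for every n ≥ 1, E[Z_n] = Σ_{k=1}^{n} (d!)^k Γ(k)^d / Γ(dk+1). -/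
open MeasureTheory ProbabilityTheory Filter Asymptotics Real Set

noncomputable section

attribute [local instance] Classical.propDecidable

/-!
The `k`-th point is a dominating record iff each of the `k` earlier points lies in the open box
below it, so by independence (integrating out the `k`-th point last) it is a record with
probability `∫ μ{q ≺ x}^k dμ(x)`, whatever the common law `μ`. For the uniform law on `S_d`,
which has density `d!`, the box below a point `x ∈ S_d` lies inside `S_d`, so
`μ{q ≺ x} = d! ∏ xᵢ`. What is left is the Dirichlet integral
`∫_{t S_d} ∏ xᵢ^k dx = (k!)^d t^(d(k+1)) / (d(k+1))!`, obtained by induction on `d`, slicing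
along the first coordinate; each step is the beta integral
`∫₀ᵗ x^a (t - x)^b dx = a! b! t^(a+b+1) / (a+b+1)!`.
-/

namespace DominatingRecords

open scoped ENNReal Nat

variable {Ω α : Type*} [MeasurableSpace Ω] [MeasurableSpace α]

theorem map_pi_eq_pi_of_iIndepFun {ι κ : Type*} [Fintype κ] {P : Measure Ω}
    [IsProbabilityMeasure P] {μ : Measure α} {p : ι → Ω → α} (hmeas : ∀ i, Measurable (p i))
    (hdist : ∀ i, P.map (p i) = μ) (hindep : iIndepFun p P) {g : κ → ι}
    (hg : Function.Injective g) :
    P.map (fun ω j => p (g j) ω) = Measure.pi fun _ : κ => μ := by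
  simpa only [hdist] using
    (hindep.precomp hg).map_fun_eq_pi_map fun j => (hmeas (g j)).aemeasurable

theorem pi_setOf_forall_rel_last (μ : Measure α) [SigmaFinite μ] {r : α → α → Prop}
    (hr : MeasurableSet {z : α × α | r z.1 z.2}) (k : ℕ) :
    Measure.pi (fun _ : Fin (k + 1) => μ) {y | ∀ i : Fin k, r (y i.castSucc) (y (Fin.last k))}
      = ∫⁻ x, μ {q | r q x} ^ k ∂μ := by
  set e := MeasurableEquiv.piFinSuccAbove (fun _ : Fin (k + 1) => α) (Fin.last k)
  have he : ∀ x z, e.symm (x, z) = Fin.snoc z x := fun x z => Fin.insertNth_last' x z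
  have hpre : e.symm ⁻¹' {y | ∀ i : Fin k, r (y i.castSucc) (y (Fin.last k))}
      = {q : α × (Fin k → α) | ∀ i, r (q.2 i) q.1} := by
    ext ⟨x, z⟩
    simp [he]
  have hmeas : MeasurableSet {q : α × (Fin k → α) | ∀ i, r (q.2 i) q.1} := by
    simp only [Set.ofPred_forall]
    exact .iInter fun i =>
      hr.preimage (f := fun q : α × (Fin k → α) => (q.2 i, q.1)) (by fun_prop)
  have hfiber : ∀ x, Prod.mk x ⁻¹' {q : α × (Fin k → α) | ∀ i, r (q.2 i) q.1}
      = Set.univ.pi fun _ => {q | r q x} := fun x => by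
    ext z
    simp
  rw [← (measurePreserving_piFinSuccAbove (fun _ => μ) (Fin.last k)).symm.measure_preimage_equiv,
    hpre, Measure.prod_apply hmeas]
  simp_rw [hfiber, Measure.pi_pi, Finset.prod_const, Finset.card_univ, Fintype.card_fin]

theorem measurableSet_setOf_prec (d : ℕ) :
    MeasurableSet {z : (Fin d → ℝ) × (Fin d → ℝ) | prec z.1 z.2} := by
  unfold prec
  measurability

theorem integral_domCount {P : Measure Ω} [IsProbabilityMeasure P] {d : ℕ}
    {μ : Measure (Fin d → ℝ)} [SigmaFinite μ] {p : ℕ → Ω → Fin d → ℝ}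
    (hmeas : ∀ n, Measurable (p n)) (hdist : ∀ n, P.map (p n) = μ) (hindep : iIndepFun p P)
    (n : ℕ) :
    ∫ ω, (domCount (fun i => p i ω) n : ℝ) ∂P
      = ∑ k ∈ Finset.range n, (∫⁻ x, μ {q | prec q x} ^ k ∂μ).toReal := by
  let S k := {y : Fin (k + 1) → Fin d → ℝ | ∀ i : Fin k, prec (y i.castSucc) (y (Fin.last k))}
  have hS : ∀ k, MeasurableSet (S k) := fun k => by
    unfold S prec
    measurability
  have hfirst : ∀ k, Measurable fun ω (j : Fin (k + 1)) => p j ω :=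
    fun k => measurable_pi_lambda _ fun j => hmeas j
  let E k := (fun ω (j : Fin (k + 1)) => p j ω) ⁻¹' S k
  have hE : ∀ k, MeasurableSet (E k) := fun k => hfirst k (hS k)
  have hcount : ∀ ω, (domCount (fun i => p i ω) n : ℝ)
      = ∑ k ∈ Finset.range n, (E k).indicator 1 ω := by
    intro ω
    rw [domCount, Finset.natCast_card_filter]
    refine Finset.sum_congr rfl fun k _ => ?_
    simp [E, S, Set.indicator_apply, Fin.forall_iff]
  have hprob : ∀ k, P (E k) = ∫⁻ x, μ {q | prec q x} ^ k ∂μ := by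
    intro k
    rw [← Measure.map_apply (hfirst k) (hS k),
      map_pi_eq_pi_of_iIndepFun hmeas hdist hindep Fin.val_injective,
      pi_setOf_forall_rel_last μ (measurableSet_setOf_prec d)]
  simp_rw [hcount]
  rw [integral_finsetSum _ fun k _ => (integrable_const 1).indicator (hE k)]
  simp_rw [integral_indicator_one (hE _), measureReal_def, hprob]

theorem integral_pow_mul_sub_pow (a b : ℕ) (t : ℝ) :
    ∫ x in 0..t, x ^ a * (t - x) ^ b = (a ! * b ! / (a + b + 1) ! : ℝ) * t ^ (a + b + 1) := by
  induction b generalizing a with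
  | zero =>
    simp only [pow_zero, mul_one, integral_pow, Nat.add_zero, Nat.factorial_succ,
      Nat.factorial_zero]
    push_cast
    field_simp
    ring
  | succ b ih =>
    have hu : ∀ x ∈ Set.uIcc 0 t,
        HasDerivAt (fun x : ℝ => (t - x) ^ (b + 1)) (-((b + 1) * (t - x) ^ b)) x := by
      intro x _
      refine (((hasDerivAt_id' x).const_sub t).fun_pow (b + 1)).congr_deriv ?_
      push_cast
      ring
    have hv : ∀ x ∈ Set.uIcc 0 t, HasDerivAt (fun x : ℝ => x ^ (a + 1) / (a + 1)) (x ^ a) x := by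
      intro x _
      refine ((hasDerivAt_pow (a + 1) x).div_const ((a : ℝ) + 1)).congr_deriv ?_
      push_cast
      field_simp
    have ibp := intervalIntegral.integral_mul_deriv_eq_deriv_mul hu hv
      (by apply Continuous.intervalIntegrable; fun_prop)
      (by apply Continuous.intervalIntegrable; fun_prop)
    calc ∫ x in 0..t, x ^ a * (t - x) ^ (b + 1)
        = ∫ x in 0..t, (t - x) ^ (b + 1) * x ^ a := by simp_rw [mul_comm]
      _ = (b + 1) / (a + 1) * ∫ x in 0..t, x ^ (a + 1) * (t - x) ^ b := by
        rw [ibp, ← intervalIntegral.integral_const_mul]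
        simp only [sub_self, ne_eq, Nat.add_eq_zero_iff, one_ne_zero, and_false,
          not_false_eq_true, zero_pow, zero_mul, zero_div, sub_zero, mul_zero, neg_mul,
          intervalIntegral.integral_neg, zero_sub, neg_neg]
        apply intervalIntegral.integral_congr
        intro x _
        field_simp
      _ = _ := by
        rw [ih (a + 1), show a + 1 + b + 1 = a + (b + 1) + 1 by ring, Nat.factorial_succ a,
          Nat.factorial_succ b]
        push_cast
        field_simp

def scaledSimplex (d : ℕ) (t : ℝ) : Set (Fin d → ℝ) := {x | (∀ i, 0 ≤ x i) ∧ ∑ i, x i ≤ t}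

theorem measurableSet_scaledSimplex (d : ℕ) (t : ℝ) : MeasurableSet (scaledSimplex d t) := by
  unfold scaledSimplex
  measurability

theorem cons_mem_scaledSimplex_iff {d : ℕ} {t s : ℝ} {z : Fin d → ℝ} :
    (Fin.cons s z : Fin (d + 1) → ℝ) ∈ scaledSimplex (d + 1) t
      ↔ s ∈ Set.Icc 0 t ∧ z ∈ scaledSimplex d (t - s) := by
  simp only [scaledSimplex, Set.mem_ofPred_eq, Set.mem_Icc, Fin.forall_fin_succ, Fin.cons_zero,
    Fin.cons_succ, Fin.sum_univ_succ]
  constructor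
  · rintro ⟨⟨hs, hz⟩, hsum⟩
    have : 0 ≤ ∑ i, z i := Finset.sum_nonneg fun i _ => hz i
    exact ⟨⟨hs, by linarith⟩, hz, by linarith⟩
  · rintro ⟨⟨hs, -⟩, hz, hsum⟩
    exact ⟨⟨hs, hz⟩, by linarith⟩

theorem lintegral_scaledSimplex_succ {d : ℕ} (t : ℝ) {g : ℝ → ℝ≥0∞} {h : (Fin d → ℝ) → ℝ≥0∞}
    (hg : Measurable g) (hh : Measurable h) :
    ∫⁻ x in scaledSimplex (d + 1) t, g (x 0) * h (Fin.tail x)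
      = ∫⁻ s in Set.Icc 0 t, g s * ∫⁻ z in scaledSimplex d (t - s), h z := by
  set e := MeasurableEquiv.piFinSuccAbove (fun _ : Fin (d + 1) => ℝ) 0
  have he : ∀ q, e.symm q = Fin.cons q.1 q.2 := fun q => Fin.insertNth_zero' q.1 q.2
  set F := (scaledSimplex (d + 1) t).indicator fun x => g (x 0) * h (Fin.tail x)
  have hF : Measurable fun q => F (e.symm q) :=
    (((hg.comp (measurable_pi_apply 0)).mul (hh.comp (by fun_prop))).indicator
      (measurableSet_scaledSimplex _ _)).comp e.symm.measurable
  have hslice : ∀ s z, F (Fin.cons s z)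
      = (Set.Icc 0 t).indicator g s * (scaledSimplex d (t - s)).indicator h z := by
    intro s z
    simp only [F, Set.indicator_apply, cons_mem_scaledSimplex_iff, Fin.cons_zero, Fin.tail_cons]
    split_ifs <;> simp_all
  rw [← lintegral_indicator (measurableSet_scaledSimplex _ _),
    ← ((volume_preserving_piFinSuccAbove (fun _ => ℝ) 0).symm).lintegral_comp_emb
      e.symm.measurableEmbedding, Measure.volume_eq_prod,
    lintegral_prod _ hF.aemeasurable,
    ← lintegral_indicator measurableSet_Icc]
  refine lintegral_congr fun s => ?_
  simp only [he, hslice]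
  rw [lintegral_const_mul _ (hh.indicator (measurableSet_scaledSimplex _ _)),
    lintegral_indicator (measurableSet_scaledSimplex _ _), Set.indicator_mul_left]

theorem lintegral_scaledSimplex_prod_pow (k d : ℕ) {t : ℝ} (ht : 0 ≤ t) :
    ∫⁻ x in scaledSimplex d t, ∏ i, ENNReal.ofReal (x i ^ k)
      = ENNReal.ofReal ((k ! : ℝ) ^ d / (d * (k + 1))! * t ^ (d * (k + 1))) := by
  induction d generalizing t with
  | zero =>
    have : scaledSimplex 0 t = Set.univ := by ext x; simp [scaledSimplex, ht]
    simp [this, volume_pi]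
  | succ d ih =>
    set c : ℝ := (k ! : ℝ) ^ d / (d * (k + 1))!
    set m := d * (k + 1)
    have hnonneg : ∀ s ∈ Set.Icc 0 t, 0 ≤ s ^ k * (c * (t - s) ^ m) := fun s hs =>
      mul_nonneg (pow_nonneg hs.1 k)
        (mul_nonneg (by positivity) (pow_nonneg (by linarith [hs.2]) m))
    calc ∫⁻ x in scaledSimplex (d + 1) t, ∏ i, ENNReal.ofReal (x i ^ k)
        = ∫⁻ x in scaledSimplex (d + 1) t,
            ENNReal.ofReal (x 0 ^ k) * ∏ i, ENNReal.ofReal (Fin.tail x i ^ k) := by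
          simp_rw [Fin.prod_univ_succ]
          rfl
      _ = ∫⁻ s in Set.Icc 0 t, ENNReal.ofReal (s ^ k)
            * ∫⁻ z in scaledSimplex d (t - s), ∏ i, ENNReal.ofReal (z i ^ k) :=
          lintegral_scaledSimplex_succ (g := fun s => ENNReal.ofReal (s ^ k))
            (h := fun z => ∏ i, ENNReal.ofReal (z i ^ k)) t (by fun_prop) (by fun_prop)
      _ = ∫⁻ s in Set.Icc 0 t, ENNReal.ofReal (s ^ k * (c * (t - s) ^ m)) := by
          refine setLIntegral_congr_fun measurableSet_Icc fun s hs => ?_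
          rw [ih (by linarith [hs.2]), ← ENNReal.ofReal_mul (pow_nonneg hs.1 k)]
      _ = ENNReal.ofReal (∫ s in 0..t, s ^ k * (c * (t - s) ^ m)) := by
          rw [intervalIntegral.integral_of_le ht, ← integral_Icc_eq_integral_Ioc,
            ofReal_integral_eq_lintegral_ofReal (Continuous.integrableOn_Icc (by fun_prop))
              (ae_restrict_of_forall_mem measurableSet_Icc hnonneg)]
      _ = _ := by
          simp_rw [mul_left_comm _ c, intervalIntegral.integral_const_mul,
            integral_pow_mul_sub_pow]
          congr 1
          rw [show k + m + 1 = (d + 1) * (k + 1) by ring]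
          simp only [c, m]
          field_simp
          ring

theorem simplex_eq_scaledSimplex (d : ℕ) : simplex d = scaledSimplex d 1 := rfl

theorem volume_simplex (d : ℕ) : volume (simplex d) = (d ! : ℝ≥0∞)⁻¹ := by
  have h := lintegral_scaledSimplex_prod_pow 0 d zero_le_one
  simp only [pow_zero, ENNReal.ofReal_one, Finset.prod_const_one, setLIntegral_one, one_pow,
    mul_one, Nat.factorial_zero, Nat.cast_one, zero_add] at h
  rw [simplex_eq_scaledSimplex, h, one_div, ENNReal.ofReal_inv_of_pos (by positivity),
    ENNReal.ofReal_natCast]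

theorem unif_simplex (d : ℕ) : unif (simplex d) = (d ! : ℝ≥0∞) • volume.restrict (simplex d) := by
  rw [unif, volume_simplex, inv_inv]

instance isProbabilityMeasure_unif_simplex (d : ℕ) : IsProbabilityMeasure (unif (simplex d)) := by
  constructor
  rw [unif_simplex, Measure.smul_apply, Measure.restrict_apply_univ, volume_simplex, smul_eq_mul,
    ENNReal.mul_inv_cancel (by positivity) (ENNReal.natCast_ne_top _)]

theorem unif_simplex_setOf_prec {d : ℕ} {x : Fin d → ℝ} (hx : x ∈ simplex d) :
    unif (simplex d) {q | prec q x} = d ! * ∏ i, ENNReal.ofReal (x i) := by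
  have hbox : {q | prec q x} ∩ simplex d = Set.univ.pi fun i => Set.Ico 0 (x i) := by
    ext q
    simp only [Set.mem_inter_iff, Set.mem_ofPred_eq, Set.mem_pi, Set.mem_univ, Set.mem_Ico,
      forall_true_left, simplex, prec]
    refine ⟨fun ⟨hlt, hnonneg, _⟩ i => ⟨hnonneg i, hlt i⟩, fun h => ⟨fun i => (h i).2,
      fun i => (h i).1, ?_⟩⟩
    exact (Finset.sum_le_sum fun i _ => (h i).2.le).trans hx.2
  rw [unif_simplex, Measure.smul_apply, Measure.restrict_apply (by unfold prec; measurability),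
    hbox, volume_pi_pi, smul_eq_mul]
  simp only [Real.volume_Ico, sub_zero]

theorem lintegral_unif_simplex_prec_pow (d k : ℕ) :
    ∫⁻ x, unif (simplex d) {q | prec q x} ^ k ∂unif (simplex d)
      = ENNReal.ofReal ((d ! : ℝ) ^ (k + 1) * (k ! : ℝ) ^ d / (d * (k + 1))!) := by
  have hunif : ∀ f : (Fin d → ℝ) → ℝ≥0∞,
      ∫⁻ x, f x ∂unif (simplex d) = d ! * ∫⁻ x in simplex d, f x := fun f => by
    rw [unif_simplex, lintegral_smul_measure, smul_eq_mul]
  calc ∫⁻ x, unif (simplex d) {q | prec q x} ^ k ∂unif (simplex d)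
      = d ! * ∫⁻ x in simplex d, (d ! : ℝ≥0∞) ^ k * ∏ i, ENNReal.ofReal (x i ^ k) := by
        rw [hunif]
        congr 1
        refine setLIntegral_congr_fun (measurableSet_scaledSimplex d 1) fun x hx => ?_
        rw [unif_simplex_setOf_prec hx, mul_pow, ← Finset.prod_pow]
        simp only [ENNReal.ofReal_pow (hx.1 _)]
    _ = _ := by
        rw [lintegral_const_mul _ (by fun_prop), simplex_eq_scaledSimplex,
          lintegral_scaledSimplex_prod_pow k d zero_le_one, one_pow, mul_one, ← mul_assoc,
          ← pow_succ', ← ENNReal.ofReal_natCast, ← ENNReal.ofReal_pow (by positivity),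
          ← ENNReal.ofReal_mul (by positivity), mul_div_assoc]

end DominatingRecords

theorem dominating_records_mean_simplex_general
    {Ω : Type*} [MeasurableSpace Ω] (P : Measure Ω) [IsProbabilityMeasure P]
    (d : ℕ) (p : ℕ → Ω → (Fin d → ℝ))
    (hmeas : ∀ n, Measurable (p n))
    (hdist : ∀ n, P.map (p n) = unif (simplex d))
    (hindep : iIndepFun p P) :
    ∀ n : ℕ, 1 ≤ n →
      ∫ ω, (domCount (fun i => p i ω) n : ℝ) ∂P =
        ∑ k ∈ Finset.Icc 1 n,
          (d.factorial : ℝ) ^ k * Real.Gamma (k : ℝ) ^ d /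
            Real.Gamma ((d : ℝ) * k + 1) := by
  intro n _
  rw [DominatingRecords.integral_domCount hmeas hdist hindep,
    ← Finset.Ico_add_one_right_eq_Icc, Finset.sum_Ico_eq_sum_range, Nat.add_sub_cancel]
  refine Finset.sum_congr rfl fun k _ => ?_
  rw [add_comm 1 k, DominatingRecords.lintegral_unif_simplex_prec_pow,
    ENNReal.toReal_ofReal (by positivity), Nat.cast_succ, Real.Gamma_nat_eq_factorial,
    show (d : ℝ) * (k + 1) = (d * (k + 1) : ℕ) by push_cast; ring, Real.Gamma_nat_eq_factorial]

/-- Exact formula for the expected number of dominating records for iud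
samples from the `d`-dimensional simplex. -/
theorem dominating_records_mean_simplex
    {Ω : Type*} [MeasurableSpace Ω] (P : Measure Ω) [IsProbabilityMeasure P]
    (d : ℕ) (hd : 1 ≤ d) (p : ℕ → Ω → (Fin d → ℝ))
    (hmeas : ∀ n, Measurable (p n))
    (hdist : ∀ n, P.map (p n) = unif (simplex d))
    (hindep : iIndepFun p P) :
    ∀ n : ℕ, 1 ≤ n →
      ∫ ω, (domCount (fun i => p i ω) n : ℝ) ∂P =
        ∑ k ∈ Finset.Icc 1 n,
          (d.factorial : ℝ) ^ k * Real.Gamma (k : ℝ) ^ d /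
            Real.Gamma ((d : ℝ) * k + 1) :=
  dominating_records_mean_simplex_general P d p hmeas hdist hindep
end
end
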